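/- arXiv:2106.13326 — 4 statements merged into one kernel-verified Lean document; each statement's English description precedes it below -/
import Mathlib

section
/- If h* is a classifier minimizing the expected 0/1 loss over all measurable classifiers and P_X(Mar_r(h*)) = 0, then h* also minimizes the expected r-robust loss, and the minimal r-robust risk equals the Bayes (0/1) risk. -/
open MeasureTheory Metric Set ENNReal

/-- The `r`-margin area of a classifier `h`. -/
def marginArea {X : Type*} [MetricSpace X] (r : ℝ) (h : X → Bool) : Set X :=
  {x | ∃ z, dist x z < r ∧ h z ≠ h x}

/-- Expected 0/1 loss of a classifier `h` under distribution `P`. -/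
def zeroOneRisk {X : Type*} [MetricSpace X] [MeasurableSpace X]
    (P : Measure (X × Bool)) (h : X → Bool) : ℝ≥0∞ :=
  P {p | h p.1 ≠ p.2}

/-- Expected `r`-robust loss of a classifier `h` under distribution `P`. -/
def robustRisk {X : Type*} [MetricSpace X] [MeasurableSpace X]
    (P : Measure (X × Bool)) (r : ℝ) (h : X → Bool) : ℝ≥0∞ :=
  P {p | ∃ z, dist p.1 z < r ∧ h z ≠ p.2}

lemma zeroOne_le_robust {X : Type*} [MetricSpace X] [MeasurableSpace X]
    (P : Measure (X × Bool)) {r : ℝ} (hr : 0 < r) (g : X → Bool) :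
    zeroOneRisk P g ≤ robustRisk P r g := by
  apply measure_mono
  intro p hp
  exact ⟨p.1, by simpa using hr, hp⟩

/-- a 0/1-optimal classifier whose `r`-margin has zero mass is also
`r`-robust optimal, and the optimal robust risk equals the Bayes risk. -/
theorem zero_margin_optimal {X : Type*} [MetricSpace X] [MeasurableSpace X]
    (P : Measure (X × Bool)) [IsProbabilityMeasure P] (hstar : X → Bool)
    {r : ℝ} (hr : 0 < r)
    (hopt : ∀ g : X → Bool, zeroOneRisk P hstar ≤ zeroOneRisk P g)
    (hmar : P {p | p.1 ∈ marginArea r hstar} = 0) :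
    (∀ g : X → Bool, robustRisk P r hstar ≤ robustRisk P r g) ∧
    (⨅ g : X → Bool, robustRisk P r g) = ⨅ g : X → Bool, zeroOneRisk P g := by
  have key : robustRisk P r hstar = zeroOneRisk P hstar := by
    apply le_antisymm
    · calc robustRisk P r hstar
          ≤ P ({p : X × Bool | hstar p.1 ≠ p.2} ∪ {p | p.1 ∈ marginArea r hstar}) := by
            apply measure_mono
            rintro p ⟨z, hz, hne⟩
            by_cases h : hstar p.1 = p.2
            · exact Or.inr ⟨z, hz, by rw [h]; exact hne⟩
            · exact Or.inl h
      _ ≤ P {p : X × Bool | hstar p.1 ≠ p.2} + P {p | p.1 ∈ marginArea r hstar} :=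
            measure_union_le _ _
      _ = zeroOneRisk P hstar := by rw [hmar, add_zero]; rfl
    · exact zeroOne_le_robust P hr hstar
  constructor
  · intro g
    calc robustRisk P r hstar = zeroOneRisk P hstar := key
      _ ≤ zeroOneRisk P g := hopt g
      _ ≤ robustRisk P r g := zeroOne_le_robust P hr g
  · apply le_antisymm
    · calc (⨅ g : X → Bool, robustRisk P r g) ≤ robustRisk P r hstar := iInf_le _ _
        _ = zeroOneRisk P hstar := key
        _ = ⨅ g : X → Bool, zeroOneRisk P g :=
            le_antisymm (le_iInf hopt) (iInf_le _ _)
    · exact le_iInf fun g =>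
        (iInf_le (fun g => zeroOneRisk P g) g).trans (zeroOne_le_robust P hr g)
end

section
/- If for every 0/1-optimal classifier h the margin area satisfies P_X(Mar_r(h)) > 0, and moreover every 0/1-optimal classifier has regression-function value bounded away from the labels on its margin (so its conditional 0/1 loss is at most 1 while its robust loss is 1 on a positive-mass margin set), then the optimal r-robust risk is strictly greater than the Bayes 0/1 risk: inf_h L^r_P(h) > L^{0/1,*}_P. Conversely, if some 0/1-optimal classifier h has P_X(Mar_r(h)) = 0, then the two optimal risks are equal. -/
open MeasureTheory Metric Set ENNReal

set_option linter.unusedSectionVars false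

namespace RobustAux

variable {X : Type*} [MetricSpace X] [MeasurableSpace X]

/-- The fiber measure for label `b`. -/
noncomputable def mu (P : Measure (X × Bool)) (b : Bool) : Measure X :=
  (P.restrict {p : X × Bool | p.2 = b}).map Prod.fst

lemma mu_apply (P : Measure (X × Bool)) (b : Bool) (s : Set X) :
    mu P b s = P {p : X × Bool | p.1 ∈ s ∧ p.2 = b} := by
  have hG : MeasurableSet {p : X × Bool | p.2 = b} :=
    measurable_snd (measurableSet_singleton b)
  apply le_antisymm
  · set A := toMeasurable P {p : X × Bool | p.1 ∈ s ∧ p.2 = b} with hA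
    have hAm : MeasurableSet A := measurableSet_toMeasurable _ _
    have hs'm : MeasurableSet {x : X | (x, b) ∈ A} := measurable_prodMk_right hAm
    have hsub : s ⊆ {x : X | (x, b) ∈ A} := fun x hx => subset_toMeasurable _ _ ⟨hx, rfl⟩
    calc mu P b s ≤ mu P b {x : X | (x, b) ∈ A} := measure_mono hsub
      _ = (P.restrict {p : X × Bool | p.2 = b}) (Prod.fst ⁻¹' {x : X | (x, b) ∈ A}) :=
          Measure.map_apply measurable_fst hs'm
      _ = P (Prod.fst ⁻¹' {x : X | (x, b) ∈ A} ∩ {p : X × Bool | p.2 = b}) :=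
          Measure.restrict_apply' hG
      _ ≤ P A := by
          apply measure_mono
          rintro ⟨x, c⟩ ⟨h1, h2⟩
          simp only [mem_setOf_eq] at h1 h2
          subst h2; exact h1
      _ = P {p : X × Bool | p.1 ∈ s ∧ p.2 = b} := measure_toMeasurable _
  · conv_rhs => rw [← measure_toMeasurable s]
    rw [mu, Measure.map_apply measurable_fst (measurableSet_toMeasurable _ _),
      Measure.restrict_apply' hG]
    exact measure_mono fun p hp => ⟨subset_toMeasurable _ _ hp.1, hp.2⟩

lemma mu_ne_top (P : Measure (X × Bool)) [IsFiniteMeasure P] (b : Bool) (s : Set X) :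
    mu P b s ≠ ∞ := by
  rw [mu_apply]; exact measure_ne_top P _

lemma P_split (P : Measure (X × Bool)) (st sf : Set X) :
    P {p : X × Bool | (p.2 = true ∧ p.1 ∈ st) ∨ (p.2 = false ∧ p.1 ∈ sf)} =
      mu P true st + mu P false sf := by
  have hG : MeasurableSet {p : X × Bool | p.2 = true} :=
    measurable_snd (measurableSet_singleton true)
  rw [← measure_inter_add_diff _ hG, mu_apply, mu_apply]
  congr 1
  · congr 1; ext ⟨x, b⟩; cases b <;> simp
  · congr 1; ext ⟨x, b⟩; cases b <;> simp

lemma zeroOne_eq (P : Measure (X × Bool)) (h : X → Bool) :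
    zeroOneRisk P h = mu P true {x | h x = false} + mu P false {x | h x = true} := by
  rw [← P_split, zeroOneRisk]
  congr 1; ext ⟨x, b⟩; cases b <;> cases hb : h x <;> simp [hb]

/-- Consequence of 0/1-optimality: for any measurable `K`, the error mass inside the
cylinder over `K` is at most the mass of either label over `K`. -/
lemma opt_bound (P : Measure (X × Bool)) [IsProbabilityMeasure P] (h : X → Bool)
    (hopt : ∀ g, zeroOneRisk P h ≤ zeroOneRisk P g) {K : Set X} (hK : MeasurableSet K)
    (b : Bool) :
    mu P true ({x | h x = false} ∩ K) + mu P false ({x | h x = true} ∩ K) ≤ mu P (!b) K := by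
  classical
  set F := {x | h x = false}
  set T := {x | h x = true}
  set g : X → Bool := fun x => if x ∈ K then b else h x with hg
  have hrisk : zeroOneRisk P g ≤
      mu P true (F \ K) + mu P false (T \ K) +
        (if b then mu P false K else mu P true K) := by
    cases b
    · have : zeroOneRisk P g = mu P true ((F \ K) ∪ K) + mu P false (T \ K) := by
        rw [← P_split, zeroOneRisk]
        congr 1; ext ⟨x, c⟩
        by_cases hx : x ∈ K <;> cases c <;> cases hb : h x <;>
          simp [hg, hx, hb, F, T, mem_setOf_eq]
      rw [this]
      have h1 : mu P true ((F \ K) ∪ K) ≤ mu P true (F \ K) + mu P true K :=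
        measure_union_le _ _
      simpa [add_comm, add_left_comm, add_assoc] using
        add_le_add_right h1 (mu P false (T \ K))
    · have : zeroOneRisk P g = mu P true (F \ K) + mu P false ((T \ K) ∪ K) := by
        rw [← P_split, zeroOneRisk]
        congr 1; ext ⟨x, c⟩
        by_cases hx : x ∈ K <;> cases c <;> cases hb : h x <;>
          simp [hg, hx, hb, F, T, mem_setOf_eq]
      rw [this]
      have h1 : mu P false ((T \ K) ∪ K) ≤ mu P false (T \ K) + mu P false K :=
        measure_union_le _ _
      simpa [add_comm, add_left_comm, add_assoc] using
        add_le_add_left h1 (mu P true (F \ K))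
  have hFsplit : mu P true (F ∩ K) + mu P true (F \ K) = mu P true F :=
    measure_inter_add_diff _ hK
  have hTsplit : mu P false (T ∩ K) + mu P false (T \ K) = mu P false T :=
    measure_inter_add_diff _ hK
  have hmain := (zeroOne_eq P h ▸ hopt g).trans hrisk
  rw [← hFsplit, ← hTsplit] at hmain
  have hfin : mu P true (F \ K) + mu P false (T \ K) ≠ ∞ :=
    ENNReal.add_ne_top.2 ⟨mu_ne_top P _ _, mu_ne_top P _ _⟩
  have hre : mu P true (F ∩ K) + mu P false (T ∩ K) +
      (mu P true (F \ K) + mu P false (T \ K)) ≤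
      (if b then mu P false K else mu P true K) +
      (mu P true (F \ K) + mu P false (T \ K)) := by
    calc mu P true (F ∩ K) + mu P false (T ∩ K) +
        (mu P true (F \ K) + mu P false (T \ K))
        = mu P true (F ∩ K) + mu P true (F \ K) +
          (mu P false (T ∩ K) + mu P false (T \ K)) := by ring
      _ ≤ mu P true (F \ K) + mu P false (T \ K) +
          (if b then mu P false K else mu P true K) := hmain
      _ = (if b then mu P false K else mu P true K) +
          (mu P true (F \ K) + mu P false (T \ K)) := by ring
  have hres := (ENNReal.add_le_add_iff_right hfin).1 hre
  cases b <;> simpa using hres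

/-- If adding `S` to `F` does not increase the (outer) measure, then `S` is almost
contained in the measurable hull of `F`. -/
lemma side_zero {ν : Measure X} {F S : Set X} (hfin : ν F ≠ ∞) (hFS : ν (F ∪ S) = ν F) :
    ν (S \ toMeasurable ν F) = 0 := by
  set U := toMeasurable ν F with hU
  have hUm : MeasurableSet U := measurableSet_toMeasurable ν F
  have hsplit := measure_inter_add_diff (μ := ν) (F ∪ S) hUm
  have h1 : ν F ≤ ν ((F ∪ S) ∩ U) :=
    measure_mono fun x hx => ⟨Or.inl hx, subset_toMeasurable _ _ hx⟩
  have h3 : ν ((F ∪ S) \ U) = 0 := by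
    have hle : ν F + ν ((F ∪ S) \ U) ≤ ν F + 0 := by
      calc ν F + ν ((F ∪ S) \ U) ≤ ν ((F ∪ S) ∩ U) + ν ((F ∪ S) \ U) :=
            add_le_add_left h1 _
        _ = ν (F ∪ S) := hsplit
        _ = ν F := hFS
        _ = ν F + 0 := (add_zero _).symm
    simpa using (ENNReal.add_le_add_iff_left hfin).1 hle
  refine le_antisymm (le_trans (measure_mono ?_) h3.le) zero_le
  exact diff_subset_diff_left subset_union_right

lemma part_zero (P : Measure (X × Bool)) [IsProbabilityMeasure P] (h : X → Bool)
    (hopt : ∀ g, zeroOneRisk P h ≤ zeroOneRisk P g) {S : Set X}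
    (hS : mu P true (S \ toMeasurable (mu P true) {x | h x = false}) = 0)
    (hST : S ⊆ {x | h x = true}) :
    mu P true S = 0 ∧ mu P false S = 0 := by
  set F := {x | h x = false} with hF
  set T := {x | h x = true} with hT
  set U := toMeasurable (mu P true) F with hUdef
  have hUm : MeasurableSet U := measurableSet_toMeasurable _ _
  set NT := toMeasurable (mu P true) (S \ U) with hNTdef
  set K := toMeasurable (mu P true) S ∩ toMeasurable (mu P false) S ∩ (U ∪ NT) with hKdef
  have hKm : MeasurableSet K :=
    ((measurableSet_toMeasurable _ _).inter (measurableSet_toMeasurable _ _)).inter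
      (hUm.union (measurableSet_toMeasurable _ _))
  have hSK : S ⊆ K := by
    intro x hx
    refine ⟨⟨subset_toMeasurable _ _ hx, subset_toMeasurable _ _ hx⟩, ?_⟩
    by_cases hxu : x ∈ U
    · exact Or.inl hxu
    · exact Or.inr (subset_toMeasurable _ _ ⟨hx, hxu⟩)
  have hKt : mu P true K = mu P true S :=
    le_antisymm ((measure_mono (inter_subset_left.trans inter_subset_left)).trans_eq
      (measure_toMeasurable _)) (measure_mono hSK)
  have hKf : mu P false K = mu P false S :=
    le_antisymm ((measure_mono (inter_subset_left.trans inter_subset_right)).trans_eq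
      (measure_toMeasurable _)) (measure_mono hSK)
  have hKU0 : mu P true (K \ U) = 0 := by
    have hsub : K \ U ⊆ NT := by
      rintro x ⟨hxK, hxU⟩
      rcases hxK.2 with h' | h'
      · exact absurd h' hxU
      · exact h'
    refine le_antisymm (le_trans (measure_mono hsub) ?_) zero_le
    rw [measure_toMeasurable]
    exact hS.le
  have hFK : mu P true (F ∩ K) = mu P true S := by
    have h1 : mu P true (U ∩ K) = mu P true (F ∩ K) :=
      Measure.measure_toMeasurable_inter hKm (mu_ne_top P _ _)
    have h2 : mu P true (K ∩ U) + mu P true (K \ U) = mu P true K :=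
      measure_inter_add_diff K hUm
    rw [hKU0, add_zero, hKt] at h2
    rw [← h1, inter_comm, h2]
  have hTK : mu P false S ≤ mu P false (T ∩ K) :=
    measure_mono fun x hx => ⟨hST hx, hSK hx⟩
  have ob1 : mu P true (F ∩ K) + mu P false (T ∩ K) ≤ mu P false K := by
    simpa using opt_bound P h hopt hKm true
  have ob2 : mu P true (F ∩ K) + mu P false (T ∩ K) ≤ mu P true K := by
    simpa using opt_bound P h hopt hKm false
  have ha : mu P true S = 0 := by
    have hchain : mu P true S + mu P false (T ∩ K) ≤ 0 + mu P false (T ∩ K) := by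
      calc mu P true S + mu P false (T ∩ K)
          = mu P true (F ∩ K) + mu P false (T ∩ K) := by rw [hFK]
        _ ≤ mu P false K := ob1
        _ = mu P false S := hKf
        _ ≤ mu P false (T ∩ K) := hTK
        _ = 0 + mu P false (T ∩ K) := (zero_add _).symm
    simpa using (ENNReal.add_le_add_iff_right (mu_ne_top P _ _)).1 hchain
  have hc : mu P false S ≤ 0 := by
    calc mu P false S ≤ mu P false (T ∩ K) := hTK
      _ ≤ mu P true (F ∩ K) + mu P false (T ∩ K) := le_add_self
      _ ≤ mu P true K := ob2
      _ = mu P true S := hKt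
      _ = 0 := ha
  exact ⟨ha, le_antisymm hc zero_le⟩

lemma part_zero' (P : Measure (X × Bool)) [IsProbabilityMeasure P] (h : X → Bool)
    (hopt : ∀ g, zeroOneRisk P h ≤ zeroOneRisk P g) {S : Set X}
    (hS : mu P false (S \ toMeasurable (mu P false) {x | h x = true}) = 0)
    (hSF : S ⊆ {x | h x = false}) :
    mu P true S = 0 ∧ mu P false S = 0 := by
  set F := {x | h x = false} with hF
  set T := {x | h x = true} with hT
  set W := toMeasurable (mu P false) T with hWdef
  have hWm : MeasurableSet W := measurableSet_toMeasurable _ _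
  set NF := toMeasurable (mu P false) (S \ W) with hNFdef
  set K := toMeasurable (mu P true) S ∩ toMeasurable (mu P false) S ∩ (W ∪ NF) with hKdef
  have hKm : MeasurableSet K :=
    ((measurableSet_toMeasurable _ _).inter (measurableSet_toMeasurable _ _)).inter
      (hWm.union (measurableSet_toMeasurable _ _))
  have hSK : S ⊆ K := by
    intro x hx
    refine ⟨⟨subset_toMeasurable _ _ hx, subset_toMeasurable _ _ hx⟩, ?_⟩
    by_cases hxw : x ∈ W
    · exact Or.inl hxw
    · exact Or.inr (subset_toMeasurable _ _ ⟨hx, hxw⟩)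
  have hKt : mu P true K = mu P true S :=
    le_antisymm ((measure_mono (inter_subset_left.trans inter_subset_left)).trans_eq
      (measure_toMeasurable _)) (measure_mono hSK)
  have hKf : mu P false K = mu P false S :=
    le_antisymm ((measure_mono (inter_subset_left.trans inter_subset_right)).trans_eq
      (measure_toMeasurable _)) (measure_mono hSK)
  have hKW0 : mu P false (K \ W) = 0 := by
    have hsub : K \ W ⊆ NF := by
      rintro x ⟨hxK, hxW⟩
      rcases hxK.2 with h' | h'
      · exact absurd h' hxW
      · exact h'
    refine le_antisymm (le_trans (measure_mono hsub) ?_) zero_le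
    rw [measure_toMeasurable]
    exact hS.le
  have hTK : mu P false (T ∩ K) = mu P false S := by
    have h1 : mu P false (W ∩ K) = mu P false (T ∩ K) :=
      Measure.measure_toMeasurable_inter hKm (mu_ne_top P _ _)
    have h2 : mu P false (K ∩ W) + mu P false (K \ W) = mu P false K :=
      measure_inter_add_diff K hWm
    rw [hKW0, add_zero, hKf] at h2
    rw [← h1, inter_comm, h2]
  have hFK : mu P true S ≤ mu P true (F ∩ K) :=
    measure_mono fun x hx => ⟨hSF hx, hSK hx⟩
  have ob1 : mu P true (F ∩ K) + mu P false (T ∩ K) ≤ mu P false K := by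
    simpa using opt_bound P h hopt hKm true
  have ob2 : mu P true (F ∩ K) + mu P false (T ∩ K) ≤ mu P true K := by
    simpa using opt_bound P h hopt hKm false
  have hd : mu P false S = 0 := by
    have hchain : mu P true (F ∩ K) + mu P false S ≤ mu P true (F ∩ K) + 0 := by
      calc mu P true (F ∩ K) + mu P false S
          = mu P true (F ∩ K) + mu P false (T ∩ K) := by rw [hTK]
        _ ≤ mu P true K := ob2
        _ = mu P true S := hKt
        _ ≤ mu P true (F ∩ K) := hFK
        _ = mu P true (F ∩ K) + 0 := (add_zero _).symm
    simpa using (ENNReal.add_le_add_iff_left (mu_ne_top P _ _)).1 hchain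
  have hb : mu P true S ≤ 0 := by
    calc mu P true S ≤ mu P true (F ∩ K) := hFK
      _ ≤ mu P true (F ∩ K) + mu P false (T ∩ K) := le_self_add
      _ ≤ mu P false K := ob1
      _ = mu P false S := hKf
      _ = 0 := hd
  exact ⟨le_antisymm hb zero_le, hd⟩

/-- Key lemma: a 0/1-optimal classifier whose "robust error region" has the same mass as
its plain error region must have a null margin. -/
lemma margin_zero (P : Measure (X × Bool)) [IsProbabilityMeasure P] {r : ℝ}
    (h : X → Bool) (hopt : ∀ g, zeroOneRisk P h ≤ zeroOneRisk P g)
    (hbad : P {p : X × Bool | p.1 ∈ marginArea r h ∨ h p.1 ≠ p.2} ≤ zeroOneRisk P h) :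
    P {p : X × Bool | p.1 ∈ marginArea r h} = 0 := by
  set M := marginArea r h with hM
  set F := {x | h x = false} with hF
  set T := {x | h x = true} with hT
  have e2 : P {p : X × Bool | p.1 ∈ M ∨ h p.1 ≠ p.2} =
      mu P true (F ∪ M) + mu P false (T ∪ M) := by
    rw [← P_split]
    congr 1; ext ⟨x, b⟩
    cases b <;> cases hb : h x <;> simp [hb, hF, hT, mem_union, mem_setOf_eq] <;> tauto
  have hbad2 : mu P true (F ∪ M) + mu P false (T ∪ M) ≤ mu P true F + mu P false T := by
    rw [← e2, ← zeroOne_eq]; exact hbad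
  have eqF : mu P true (F ∪ M) = mu P true F := by
    refine le_antisymm ?_ (measure_mono subset_union_left)
    have h1 : mu P true (F ∪ M) + mu P false (T ∪ M) ≤
        mu P true F + mu P false (T ∪ M) :=
      hbad2.trans (add_le_add_right (measure_mono subset_union_left) _)
    exact (ENNReal.add_le_add_iff_right (mu_ne_top P _ _)).1 h1
  have eqT : mu P false (T ∪ M) = mu P false T := by
    refine le_antisymm ?_ (measure_mono subset_union_left)
    have h1 : mu P true (F ∪ M) + mu P false (T ∪ M) ≤
        mu P true (F ∪ M) + mu P false T :=
      hbad2.trans (add_le_add_left (measure_mono subset_union_left) _)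
    exact (ENNReal.add_le_add_iff_left (mu_ne_top P _ _)).1 h1
  have hFMT : F ∪ (M ∩ T) = F ∪ M := by
    ext x; constructor
    · rintro (hx | hx)
      · exact Or.inl hx
      · exact Or.inr hx.1
    · rintro (hx | hx)
      · exact Or.inl hx
      · cases hb : h x
        · exact Or.inl hb
        · exact Or.inr ⟨hx, hb⟩
  have hTMF : T ∪ (M ∩ F) = T ∪ M := by
    ext x; constructor
    · rintro (hx | hx)
      · exact Or.inl hx
      · exact Or.inr hx.1
    · rintro (hx | hx)
      · exact Or.inl hx
      · cases hb : h x
        · exact Or.inr ⟨hx, hb⟩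
        · exact Or.inl hb
  have hS1 : mu P true ((M ∩ T) \ toMeasurable (mu P true) F) = 0 := by
    apply side_zero (mu_ne_top P _ _)
    rw [hFMT]; exact eqF
  have hS2 : mu P false ((M ∩ F) \ toMeasurable (mu P false) T) = 0 := by
    apply side_zero (mu_ne_top P _ _)
    rw [hTMF]; exact eqT
  have pz1 := part_zero P h hopt hS1 inter_subset_right
  have pz2 := part_zero' P h hopt hS2 inter_subset_right
  have hMsub : M ⊆ (M ∩ T) ∪ (M ∩ F) := by
    intro x hx
    cases hb : h x
    · exact Or.inr ⟨hx, hb⟩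
    · exact Or.inl ⟨hx, hb⟩
  have hmt : mu P true M = 0 := by
    refine le_antisymm ?_ zero_le
    calc mu P true M ≤ mu P true ((M ∩ T) ∪ (M ∩ F)) := measure_mono hMsub
      _ ≤ mu P true (M ∩ T) + mu P true (M ∩ F) := measure_union_le _ _
      _ = 0 := by rw [pz1.1, pz2.1, add_zero]
  have hmf : mu P false M = 0 := by
    refine le_antisymm ?_ zero_le
    calc mu P false M ≤ mu P false ((M ∩ T) ∪ (M ∩ F)) := measure_mono hMsub
      _ ≤ mu P false (M ∩ T) + mu P false (M ∩ F) := measure_union_le _ _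
      _ = 0 := by rw [pz1.2, pz2.2, add_zero]
  have e3 : P {p : X × Bool | p.1 ∈ M} = mu P true M + mu P false M := by
    rw [← P_split]
    congr 1; ext ⟨x, b⟩; cases b <;> simp
  rw [e3, hmt, hmf, add_zero]

end RobustAux

open RobustAux in
/-- if every 0/1-optimal classifier has positive margin mass (and
conditional 0/1 loss at most 1/2 on its margin), the optimal robust risk exceeds
the Bayes risk; conversely, if some 0/1-optimal classifier has zero margin mass,
the two optimal risks coincide. -/
theorem robust_bayes_vs_bayes {X : Type*} [MetricSpace X] [MeasurableSpace X]
    (P : Measure (X × Bool)) [IsProbabilityMeasure P] {r : ℝ} (hr : 0 < r)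
    (hBayes : ∃ h0 : X → Bool, ∀ g, zeroOneRisk P h0 ≤ zeroOneRisk P g)
    (hRob : ∃ h0 : X → Bool, ∀ g, robustRisk P r h0 ≤ robustRisk P r g) :
    ((∀ h : X → Bool, (∀ g, zeroOneRisk P h ≤ zeroOneRisk P g) →
        0 < P {p | p.1 ∈ marginArea r h} ∧
        P {p | p.1 ∈ marginArea r h ∧ h p.1 ≠ p.2} ≤ P {p | p.1 ∈ marginArea r h} / 2) →
      (⨅ g : X → Bool, zeroOneRisk P g) < ⨅ g : X → Bool, robustRisk P r g) ∧
    ((∃ h : X → Bool, (∀ g, zeroOneRisk P h ≤ zeroOneRisk P g) ∧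
        P {p | p.1 ∈ marginArea r h} = 0) →
      (⨅ g : X → Bool, robustRisk P r g) = ⨅ g : X → Bool, zeroOneRisk P g) := by
  classical
  -- basic comparisons
  have hz_le_rob : ∀ g : X → Bool, zeroOneRisk P g ≤ robustRisk P r g := by
    intro g
    apply measure_mono
    intro p hp
    exact ⟨p.1, by simpa using hr, hp⟩
  have hsub_rob : ∀ h : X → Bool,
      {p : X × Bool | p.1 ∈ marginArea r h ∨ h p.1 ≠ p.2} ⊆
        {p : X × Bool | ∃ z, dist p.1 z < r ∧ h z ≠ p.2} := by
    intro h p hp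
    rcases hp with hp | hp
    · rcases hp with ⟨z, hz1, hz2⟩
      by_cases hpe : h p.1 = p.2
      · exact ⟨z, hz1, by rw [← hpe]; exact hz2⟩
      · exact ⟨p.1, by simpa using hr, hpe⟩
    · exact ⟨p.1, by simpa using hr, hp⟩
  have hrob_sub : ∀ h : X → Bool,
      {p : X × Bool | ∃ z, dist p.1 z < r ∧ h z ≠ p.2} ⊆
        {p : X × Bool | h p.1 ≠ p.2} ∪ {p : X × Bool | p.1 ∈ marginArea r h} := by
    intro h p hp
    rcases hp with ⟨z, hz1, hz2⟩
    by_cases hpe : h p.1 = p.2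
    · exact Or.inr ⟨z, hz1, by rw [hpe]; exact hz2⟩
    · exact Or.inl hpe
  constructor
  · -- Part 1
    intro hyp
    by_contra hcon
    push_neg at hcon
    obtain ⟨hstar, hstar_rob⟩ := hRob
    have hrob_inf : robustRisk P r hstar ≤ ⨅ g : X → Bool, robustRisk P r g :=
      le_iInf hstar_rob
    by_cases hopt : ∀ g, zeroOneRisk P hstar ≤ zeroOneRisk P g
    · -- hstar is also 0/1-optimal; derive the "bad case" and contradict positive margin
      have hm := (hyp hstar hopt).1
      have hbad : P {p : X × Bool | p.1 ∈ marginArea r hstar ∨ hstar p.1 ≠ p.2} ≤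
          zeroOneRisk P hstar := by
        calc P {p : X × Bool | p.1 ∈ marginArea r hstar ∨ hstar p.1 ≠ p.2}
            ≤ robustRisk P r hstar := measure_mono (hsub_rob hstar)
          _ ≤ ⨅ g : X → Bool, robustRisk P r g := hrob_inf
          _ ≤ ⨅ g : X → Bool, zeroOneRisk P g := hcon
          _ ≤ zeroOneRisk P hstar := iInf_le _ _
      have hzero := margin_zero P hstar hopt hbad
      rw [hzero] at hm
      exact lt_irrefl _ hm
    · push_neg at hopt
      obtain ⟨g, hg⟩ := hopt
      have : robustRisk P r hstar < robustRisk P r hstar :=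
        calc robustRisk P r hstar ≤ ⨅ g : X → Bool, robustRisk P r g := hrob_inf
          _ ≤ ⨅ g : X → Bool, zeroOneRisk P g := hcon
          _ ≤ zeroOneRisk P g := iInf_le _ _
          _ < zeroOneRisk P hstar := hg
          _ ≤ robustRisk P r hstar := hz_le_rob hstar
      exact lt_irrefl _ this
  · -- Part 2
    rintro ⟨h, hopt, hm0⟩
    apply le_antisymm
    · calc (⨅ g : X → Bool, robustRisk P r g) ≤ robustRisk P r h := iInf_le _ _
        _ ≤ P ({p : X × Bool | h p.1 ≠ p.2} ∪ {p : X × Bool | p.1 ∈ marginArea r h}) :=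
            measure_mono (hrob_sub h)
        _ ≤ P {p : X × Bool | h p.1 ≠ p.2} + P {p : X × Bool | p.1 ∈ marginArea r h} :=
            measure_union_le _ _
        _ = zeroOneRisk P h := by rw [hm0, add_zero]; rfl
        _ ≤ ⨅ g : X → Bool, zeroOneRisk P g := le_iInf hopt
    · exact le_iInf fun g => (iInf_le _ g).trans (hz_le_rob g)
end

section
/- There exists a strongly separable distribution P over ℝ × {0,1} with deterministic labels such that for any r strictly larger than the separation threshold, the 0/1-optimal classifier and every r-robust-optimal classifier disagree on marginal mass 1/2. Concretely: P_X uniform on {0, a} for some a > 0 with labels f(0) = 0, f(a) = 1; for r ≤ a/2 the classifier f extended by nearest-point labeling achieves robust loss 0, but for r > a, every classifier has r-robust loss ≥ 1/2, the minimum is attained by constant classifiers, and any such robust-optimal classifier disagrees with f on mass 1/2. -/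
open MeasureTheory Metric Set ENNReal

/-- a strongly separable, deterministically labeled distribution
on `ℝ × {0,1}` (uniform on `{0, a}` with opposite labels) for which any
robustness radius beyond the separation threshold forces every robust-optimal
classifier to disagree with the 0/1-optimal classifier on mass 1/2:
for `0 < r ≤ a/2` the nearest-point extension `f` of the labeling has robust
risk 0, whereas for `r > a` every classifier has robust risk at least 1/2,
constant classifiers attain 1/2, and every robust-optimal classifier is
constant on `{0, a}` and disagrees with `f` on mass 1/2. -/
theorem strongly_separable_example (a : ℝ) (ha : 0 < a) :
    let f : ℝ → Bool := fun x => decide (a / 2 ≤ x)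
    let P : Measure (ℝ × Bool) :=
      (2 : ℝ≥0∞)⁻¹ • (Measure.dirac ((0 : ℝ), false) + Measure.dirac (a, true))
    let rR : ℝ → (ℝ → Bool) → ℝ≥0∞ :=
      fun r h => P {p | ∃ z : ℝ, dist p.1 z < r ∧ h z ≠ p.2}
    (P {p | p.2 ≠ f p.1} = 0) ∧
    (∀ r : ℝ, 0 < r → r ≤ a / 2 → rR r f = 0) ∧
    (∀ r > a, ∀ h : ℝ → Bool, 1 / 2 ≤ rR r h) ∧
    (∀ r > a, ∀ b : Bool, rR r (fun _ => b) = 1 / 2) ∧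
    (∀ r > a, ∀ h : ℝ → Bool, (∀ g, rR r h ≤ rR r g) →
      h 0 = h a ∧ P {p | h p.1 ≠ f p.1} = 1 / 2) := by
  intro f P rR
  have hf0 : f 0 = false := by simp [f]; linarith
  have hfa : f a = true := by simp [f]; linarith
  have hP : ∀ S : Set (ℝ × Bool),
      P S = 2⁻¹ * (S.indicator 1 ((0:ℝ), false) + S.indicator 1 (a, true)) := by
    intro S
    simp [P, Measure.add_apply, Measure.dirac_apply, smul_eq_mul, mul_add]
  have half : (1:ℝ≥0∞)/2 = 2⁻¹ := one_div 2
  refine ⟨?_, ?_, ?_, ?_, ?_⟩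
  · rw [hP]
    have h1 : ((0:ℝ), false) ∉ {p : ℝ × Bool | p.2 ≠ f p.1} := by simp [hf0]
    have h2 : ((a:ℝ), true) ∉ {p : ℝ × Bool | p.2 ≠ f p.1} := by simp [hfa]
    rw [Set.indicator_of_notMem h1, Set.indicator_of_notMem h2]
    simp
  · intro r hr hr2
    show P _ = 0
    rw [hP]
    have h1 : ((0:ℝ), false) ∉ {p : ℝ × Bool | ∃ z : ℝ, dist p.1 z < r ∧ f z ≠ p.2} := by
      rintro ⟨z, hz, hfz⟩
      simp only at hz hfz
      have hz' : f z = true := by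
        cases hfz' : f z with
        | false => exact absurd hfz' (by simpa using hfz)
        | true => rfl
      have : a / 2 ≤ z := by simpa [f] using hz'
      rw [Real.dist_eq, zero_sub, abs_neg] at hz
      have := le_abs_self z
      linarith
    have h2 : ((a:ℝ), true) ∉ {p : ℝ × Bool | ∃ z : ℝ, dist p.1 z < r ∧ f z ≠ p.2} := by
      rintro ⟨z, hz, hfz⟩
      simp only at hz hfz
      have hz' : f z = false := by
        cases hfz' : f z with
        | true => exact absurd hfz' (by simpa using hfz)
        | false => rfl
      have : ¬ (a / 2 ≤ z) := by simpa [f] using hz'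
      rw [Real.dist_eq] at hz
      have := le_abs_self (a - z)
      linarith
    rw [Set.indicator_of_notMem h1, Set.indicator_of_notMem h2]
    simp
  · intro r hr h
    show 1/2 ≤ P _
    rw [hP, half]
    have hd0 : dist (0:ℝ) (a/2) < r := by
      rw [Real.dist_eq, zero_sub, abs_neg, abs_of_pos (by linarith)]; linarith
    have hda : dist a (a/2) < r := by
      rw [Real.dist_eq, abs_of_pos (by linarith)]; linarith
    cases hhalf : h (a/2) with
    | true =>
      have hmem : ((0:ℝ), false) ∈ {p : ℝ × Bool | ∃ z : ℝ, dist p.1 z < r ∧ h z ≠ p.2} :=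
        ⟨a/2, hd0, by simp [hhalf]⟩
      rw [Set.indicator_of_mem hmem]
      calc (2:ℝ≥0∞)⁻¹ = 2⁻¹ * 1 := by rw [mul_one]
        _ ≤ 2⁻¹ * ((1:ℝ × Bool → ℝ≥0∞) ((0:ℝ), false) + _) := by
            gcongr
            simp
    | false =>
      have hmem : ((a:ℝ), true) ∈ {p : ℝ × Bool | ∃ z : ℝ, dist p.1 z < r ∧ h z ≠ p.2} :=
        ⟨a/2, hda, by simp [hhalf]⟩
      rw [Set.indicator_of_mem hmem]
      calc (2:ℝ≥0∞)⁻¹ = 2⁻¹ * 1 := by rw [mul_one]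
        _ ≤ 2⁻¹ * (_ + (1:ℝ × Bool → ℝ≥0∞) ((a:ℝ), true)) := by
            gcongr
            simp
  · intro r hr b
    show P _ = 1/2
    rw [hP, half]
    cases b with
    | false =>
      have h1 : ((0:ℝ), false) ∉
          {p : ℝ × Bool | ∃ z : ℝ, dist p.1 z < r ∧ (fun _ : ℝ => false) z ≠ p.2} := by
        rintro ⟨z, _, hz⟩; exact hz rfl
      have h2 : ((a:ℝ), true) ∈
          {p : ℝ × Bool | ∃ z : ℝ, dist p.1 z < r ∧ (fun _ : ℝ => false) z ≠ p.2} :=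
        ⟨a, by rw [dist_self]; linarith, by simp⟩
      rw [Set.indicator_of_notMem h1, Set.indicator_of_mem h2]
      simp
    | true =>
      have h1 : ((0:ℝ), false) ∈
          {p : ℝ × Bool | ∃ z : ℝ, dist p.1 z < r ∧ (fun _ : ℝ => true) z ≠ p.2} :=
        ⟨0, by rw [dist_self]; linarith, by simp⟩
      have h2 : ((a:ℝ), true) ∉
          {p : ℝ × Bool | ∃ z : ℝ, dist p.1 z < r ∧ (fun _ : ℝ => true) z ≠ p.2} := by
        rintro ⟨z, _, hz⟩; exact hz rfl
      rw [Set.indicator_of_mem h1, Set.indicator_of_notMem h2]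
      simp
  · intro r hr h hopt
    have hub : rR r h ≤ 1/2 := by
      have := hopt (fun _ => false)
      -- rR r (fun _ => false) = 1/2 by previous computation; redo it
      refine le_trans this (le_of_eq ?_)
      show P _ = 1/2
      rw [hP, half]
      have h1 : ((0:ℝ), false) ∉
          {p : ℝ × Bool | ∃ z : ℝ, dist p.1 z < r ∧ (fun _ : ℝ => false) z ≠ p.2} := by
        rintro ⟨z, _, hz⟩; exact hz rfl
      have h2 : ((a:ℝ), true) ∈
          {p : ℝ × Bool | ∃ z : ℝ, dist p.1 z < r ∧ (fun _ : ℝ => false) z ≠ p.2} :=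
        ⟨a, by rw [dist_self]; linarith, by simp⟩
      rw [Set.indicator_of_notMem h1, Set.indicator_of_mem h2]
      simp
    have hda : dist a (0:ℝ) < r := by
      rw [Real.dist_eq, sub_zero, abs_of_pos ha]; linarith
    have hd0 : dist (0:ℝ) a < r := by rw [dist_comm]; exact hda
    have heq : h 0 = h a := by
      by_contra hne
      -- both points are in the bad set, so rR r h = 1 > 1/2
      have hmem1 : ((0:ℝ), false) ∈ {p : ℝ × Bool | ∃ z : ℝ, dist p.1 z < r ∧ h z ≠ p.2} := by
        cases h0 : h 0 with
        | true => exact ⟨0, by rw [dist_self]; linarith, by simp [h0]⟩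
        | false =>
          have h1 : h a = true := by
            cases h1 : h a with
            | true => rfl
            | false => rw [h0, h1] at hne; exact absurd rfl hne
          exact ⟨a, hd0, by simp [h1]⟩
      have hmem2 : ((a:ℝ), true) ∈ {p : ℝ × Bool | ∃ z : ℝ, dist p.1 z < r ∧ h z ≠ p.2} := by
        cases h1 : h a with
        | false => exact ⟨a, by rw [dist_self]; linarith, by simp [h1]⟩
        | true =>
          have h0 : h 0 = false := by
            cases h0 : h 0 with
            | false => rfl
            | true => rw [h0, h1] at hne; exact absurd rfl hne
          exact ⟨0, hda, by simp [h0]⟩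
      have hone : rR r h = 1 := by
        show P _ = 1
        rw [hP, Set.indicator_of_mem hmem1, Set.indicator_of_mem hmem2]
        show (2:ℝ≥0∞)⁻¹ * ((1:ℝ × Bool → ℝ≥0∞) ((0:ℝ), false) + (1:ℝ × Bool → ℝ≥0∞) ((a:ℝ), true)) = 1
        simp only [Pi.one_apply, one_add_one_eq_two]
        exact ENNReal.inv_mul_cancel two_ne_zero ENNReal.ofNat_ne_top
      rw [hone] at hub
      have hlt : (1:ℝ≥0∞)/2 < 1 := by
        rw [half]
        exact ENNReal.inv_lt_one.mpr ENNReal.one_lt_two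
      exact absurd hub (not_le.mpr hlt)
    refine ⟨heq, ?_⟩
    rw [hP, half]
    cases h0 : h 0 with
    | false =>
      have ha' : h a = false := heq ▸ h0
      have h1 : ((0:ℝ), false) ∉ {p : ℝ × Bool | h p.1 ≠ f p.1} := by simp [h0, hf0]
      have h2 : ((a:ℝ), true) ∈ {p : ℝ × Bool | h p.1 ≠ f p.1} := by simp [ha', hfa]
      rw [Set.indicator_of_notMem h1, Set.indicator_of_mem h2]
      simp
    | true =>
      have ha' : h a = true := heq ▸ h0
      have h1 : ((0:ℝ), false) ∈ {p : ℝ × Bool | h p.1 ≠ f p.1} := by simp [h0, hf0]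
      have h2 : ((a:ℝ), true) ∉ {p : ℝ × Bool | h p.1 ≠ f p.1} := by simp [ha', hfa]
      rw [Set.indicator_of_mem h1, Set.indicator_of_notMem h2]
      simp
end

section
/- Let P be a distribution over [0,1]^d × {0,1} with deterministic labels f and margin rate Φ_P(r) = P_X(Mar_r(f)). For every ε, δ > 0, taking r with Φ_P(r) ≤ ε and partitioning [0,1]^d into t = (3√d / r)^d cells of diameter at most r/3, with probability at least 1 − δ over an i.i.d. sample S of size n ≥ 3^d d^{d/2} / (e · r^d · ε · δ), every point x outside Mar_r(f) and outside the union of empty cells is correctly classified by the 1-nearest-neighbor rule on the 1/2-adaptive robust augmentation of S, and consequently the 0/1 loss of this predictor is at most 2ε. -/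
open MeasureTheory Metric Set ENNReal

section NNAux

namespace NNAux

variable {E : Type*} [MetricSpace E] {n : ℕ} (f : E → Bool) (r : ℝ)
  (s : Fin n → E × Bool)

noncomputable def rhoS (i : Fin n) : ℝ :=
  sInf {t | ∃ j : Fin n, (s j).2 ≠ (s i).2 ∧ t = dist (s i).1 (s j).1}

noncomputable def eD (i : Fin n) (x : E) : ℝ :=
  max (dist x (s i).1 - rhoS s i / 2) 0

lemma notMar_far (hlab : ∀ i, (s i).2 = f (s i).1) {x : E}
    (hxM : x ∉ marginArea r f) {j : Fin n} (hj : (s j).2 ≠ f x) :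
    r ≤ dist x (s j).1 := by
  by_contra hc
  push_neg at hc
  exact hxM ⟨(s j).1, hc, by rw [← hlab j]; exact hj⟩

/-- Key separation lemma: if the minimizing expansion ball has the wrong label,
then every correct-label sample is at distance at least `r/2`. -/
lemma sep_lemma (hr : 0 < r) (hlab : ∀ i, (s i).2 = f (s i).1) {x : E}
    (hxM : x ∉ marginArea r f) {i₀ : Fin n}
    (hmin : ∀ j, eD s i₀ x ≤ eD s j x) (hne : (s i₀).2 ≠ f x) :
    ∀ u, (s u).2 = f x → r / 2 ≤ dist x (s u).1 := by
  intro u hu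
  by_contra hlt
  push_neg at hlt
  set t := dist x (s u).1 with ht
  have hA : r ≤ dist x (s i₀).1 := notMar_far f r s hlab hxM hne
  have hbdd : BddBelow {t | ∃ j : Fin n, (s j).2 ≠ (s i₀).2 ∧ t = dist (s i₀).1 (s j).1} := by
    refine ⟨0, ?_⟩
    rintro y ⟨j, -, rfl⟩
    exact dist_nonneg
  have hρ₀ : rhoS s i₀ ≤ dist (s i₀).1 (s u).1 :=
    csInf_le hbdd ⟨u, by rw [hu]; exact fun h => hne h.symm, rfl⟩
  have hρu : r - t ≤ rhoS s u := by
    have hmem : dist (s u).1 (s i₀).1 ∈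
        {t | ∃ j : Fin n, (s j).2 ≠ (s u).2 ∧ t = dist (s u).1 (s j).1} :=
      ⟨i₀, by rw [hu]; exact hne, rfl⟩
    apply le_csInf ⟨_, hmem⟩
    rintro y ⟨j, hj, rfl⟩
    rw [hu] at hj
    have h1 : r ≤ dist x (s j).1 := notMar_far f r s hlab hxM hj
    have h2 : dist x (s j).1 ≤ t + dist (s u).1 (s j).1 := dist_triangle x (s u).1 (s j).1
    linarith
  have hED0 : (r - t) / 2 ≤ eD s i₀ x := by
    have h3 : dist (s i₀).1 (s u).1 ≤ dist x (s i₀).1 + t := by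
      have h := dist_triangle (s i₀).1 x (s u).1
      rw [dist_comm (s i₀).1 x] at h
      exact h
    have : (r - t) / 2 ≤ dist x (s i₀).1 - rhoS s i₀ / 2 := by linarith
    exact this.trans (le_max_left _ _)
  have hEDu : eD s u x ≤ max ((3 * t - r) / 2) 0 := by
    unfold eD
    rw [← ht]
    apply max_le_max _ le_rfl
    linarith
  have hfinal := (hmin u).trans hEDu
  have : max ((3 * t - r) / 2) 0 < (r - t) / 2 := by
    apply max_lt <;> linarith
  linarith

lemma nn_correct (hr : 0 < r) (hlab : ∀ i, (s i).2 = f (s i).1)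
    {h : E → Bool}
    (hNN : ∀ x, ∃ i : Fin n, (∀ j, eD s i x ≤ eD s j x) ∧ h x = (s i).2)
    {x : E} (hxM : x ∉ marginArea r f)
    {i₀ : Fin n} (hd3 : dist x (s i₀).1 < r / 3) : h x = f x := by
  by_contra herr
  obtain ⟨i, hmin, hval⟩ := hNN x
  have hne : (s i).2 ≠ f x := by rw [← hval]; exact herr
  by_cases hcase : (s i₀).2 = f x
  · have := sep_lemma f r s hr hlab hxM hmin hne i₀ hcase
    linarith
  · have := notMar_far f r s hlab hxM hcase
    linarith

end NNAux

namespace NNAux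

variable {d : ℕ}

def cell (k : ℕ) (m : Fin d → Fin k) : Set (EuclideanSpace ℝ (Fin d)) :=
  {y | ∀ i, (m i : ℝ) / k ≤ y i ∧ y i ≤ ((m i : ℝ) + 1) / k}

lemma exists_cell {k : ℕ} (hk : 0 < k) {x : EuclideanSpace ℝ (Fin d)}
    (hx : ∀ i, x i ∈ Icc (0 : ℝ) 1) : ∃ m : Fin d → Fin k, x ∈ cell k m := by
  refine ⟨fun i => ⟨min ⌊x i * k⌋₊ (k - 1), ?_⟩, ?_⟩
  · exact lt_of_le_of_lt (min_le_right _ _) (Nat.pred_lt hk.ne')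
  · intro i
    have h0 : (0 : ℝ) ≤ x i := (hx i).1
    have h1 : x i ≤ 1 := (hx i).2
    have hk' : (0 : ℝ) < k := by exact_mod_cast hk
    constructor
    · have : ((min ⌊x i * k⌋₊ (k - 1) : ℕ) : ℝ) ≤ x i * k := by
        calc ((min ⌊x i * k⌋₊ (k - 1) : ℕ) : ℝ) ≤ (⌊x i * k⌋₊ : ℝ) := by
              exact_mod_cast min_le_left _ _
          _ ≤ x i * k := Nat.floor_le (by positivity)
      rw [div_le_iff₀ hk']
      simpa using this
    · rw [le_div_iff₀ hk']
      show x i * k ≤ ((min ⌊x i * k⌋₊ (k - 1) : ℕ) : ℝ) + 1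
      rcases le_or_gt (⌊x i * k⌋₊) (k - 1) with hle | hgt
      · rw [min_eq_left hle]
        have := Nat.lt_floor_add_one (x i * k)
        linarith
      · rw [min_eq_right hgt.le]
        have hcast : ((k - 1 : ℕ) : ℝ) + 1 = (k : ℝ) := by
          have h1k : (1 : ℕ) ≤ k := hk
          push_cast [Nat.cast_sub h1k]
          ring
        rw [hcast]
        nlinarith

lemma dist_le_of_mem_cell {k : ℕ} (hk : 0 < k) {m : Fin d → Fin k}
    {y z : EuclideanSpace ℝ (Fin d)} (hy : y ∈ cell k m) (hz : z ∈ cell k m) :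
    dist y z ≤ Real.sqrt d / k := by
  have hk' : (0 : ℝ) < k := by exact_mod_cast hk
  rw [EuclideanSpace.dist_eq]
  simp only [Real.dist_eq]
  have hbound : ∀ i, |y i - z i| ^ 2 ≤ (1 / k) ^ 2 := by
    intro i
    have h1 := (hy i).1; have h2 := (hy i).2
    have h3 := (hz i).1; have h4 := (hz i).2
    have h5 : ((m i : ℝ) + 1) / k - (m i : ℝ) / k = 1 / k := by
      rw [div_sub_div_same]; ring_nf
    have habs : |y i - z i| ≤ 1 / k := by
      rw [abs_le]
      constructor <;> linarith
    exact pow_le_pow_left₀ (abs_nonneg _) habs 2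
  calc Real.sqrt (∑ i, |y i - z i| ^ 2) ≤ Real.sqrt (∑ _i : Fin d, (1 / k) ^ 2) := by
        apply Real.sqrt_le_sqrt
        exact Finset.sum_le_sum fun i _ => hbound i
    _ = Real.sqrt (d * (1 / k) ^ 2) := by rw [Finset.sum_const, Finset.card_univ,
          Fintype.card_fin, nsmul_eq_mul]
    _ = Real.sqrt d / k := by
        rw [Real.sqrt_mul (by positivity), Real.sqrt_sq_eq_abs]
        rw [abs_of_pos (by positivity)]
        ring

lemma dist_le_sqrt_of_cube {y z : EuclideanSpace ℝ (Fin d)}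
    (hy : ∀ i, y i ∈ Icc (0:ℝ) 1) (hz : ∀ i, z i ∈ Icc (0:ℝ) 1) :
    dist y z ≤ Real.sqrt d := by
  rw [EuclideanSpace.dist_eq]
  simp only [Real.dist_eq]
  have hbound : ∀ i, |y i - z i| ^ 2 ≤ 1 := by
    intro i
    have h1 := (hy i).1; have h2 := (hy i).2
    have h3 := (hz i).1; have h4 := (hz i).2
    have habs : |y i - z i| ≤ 1 := by
      rw [abs_le]; constructor <;> linarith
    calc |y i - z i| ^ 2 ≤ 1 ^ 2 := pow_le_pow_left₀ (abs_nonneg _) habs 2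
      _ = 1 := one_pow 2
  calc Real.sqrt (∑ i, |y i - z i| ^ 2) ≤ Real.sqrt (∑ _i : Fin d, (1:ℝ)) := by
        apply Real.sqrt_le_sqrt
        exact Finset.sum_le_sum fun i _ => hbound i
    _ = Real.sqrt d := by
        rw [Finset.sum_const, Finset.card_univ, Fintype.card_fin, nsmul_eq_mul, mul_one]

lemma measurable_cell {k : ℕ} (m : Fin d → Fin k) :
    MeasurableSet {p : EuclideanSpace ℝ (Fin d) × Bool | p.1 ∈ cell k m} := by
  have : {p : EuclideanSpace ℝ (Fin d) × Bool | p.1 ∈ cell k m} =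
      ⋂ i, {p | p.1 i ∈ Icc ((m i : ℝ) / k) (((m i : ℝ) + 1) / k)} := by
    ext p; simp [cell, mem_Icc, forall_and]
  rw [this]
  exact MeasurableSet.iInter fun i =>
    ((measurable_pi_apply i).comp ((WithLp.measurable_ofLp 2 _).comp measurable_fst)) measurableSet_Icc

lemma measurable_cube :
    MeasurableSet {p : EuclideanSpace ℝ (Fin d) × Bool | ∀ i, p.1 i ∈ Icc (0:ℝ) 1} := by
  have : {p : EuclideanSpace ℝ (Fin d) × Bool | ∀ i, p.1 i ∈ Icc (0:ℝ) 1} =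
      ⋂ i, {p | p.1 i ∈ Icc (0:ℝ) 1} := by
    ext p; simp
  rw [this]
  exact MeasurableSet.iInter fun i =>
    ((measurable_pi_apply i).comp ((WithLp.measurable_ofLp 2 _).comp measurable_fst)) measurableSet_Icc

lemma real_bound (n : ℕ) (hn : 0 < n) {a : ℝ} (h0 : 0 ≤ a) (h1 : a ≤ 1) :
    a * (1 - a) ^ n ≤ (Real.exp 1 * n)⁻¹ := by
  have hn' : (0 : ℝ) < n := by exact_mod_cast hn
  have hexp1 : (0:ℝ) < Real.exp 1 := Real.exp_pos 1
  have h2 : (1 - a) ^ n ≤ Real.exp (-(a * n)) := by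
    have hb : 1 - a ≤ Real.exp (-a) := by
      have := Real.add_one_le_exp (-a)
      linarith
    calc (1 - a) ^ n ≤ (Real.exp (-a)) ^ n :=
          pow_le_pow_left₀ (by linarith) hb n
      _ = Real.exp (-a * n) := by
          rw [← Real.exp_nat_mul]; ring_nf
      _ = Real.exp (-(a * n)) := by ring_nf
  have h3 : a * n ≤ Real.exp (a * n - 1) := by
    have := Real.add_one_le_exp (a * n - 1)
    linarith
  have key : a * Real.exp (-(a * n)) ≤ (Real.exp 1 * n)⁻¹ := by
    have h4 : a * n * Real.exp (-(a * n)) ≤ Real.exp (a * n - 1) * Real.exp (-(a * n)) :=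
      mul_le_mul_of_nonneg_right h3 (Real.exp_nonneg _)
    rw [← Real.exp_add] at h4
    have h5 : Real.exp (a * n - 1 + -(a * n)) = (Real.exp 1)⁻¹ := by
      rw [← Real.exp_neg]; ring_nf
    rw [h5] at h4
    have heq : a * Real.exp (-(a * n)) = a * n * Real.exp (-(a * n)) * (n : ℝ)⁻¹ := by
      field_simp
    rw [heq, mul_inv]
    exact mul_le_mul_of_nonneg_right h4 (by positivity)
  calc a * (1 - a) ^ n ≤ a * Real.exp (-(a * n)) :=
        mul_le_mul_of_nonneg_left h2 h0
    _ ≤ (Real.exp 1 * n)⁻¹ := key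

lemma ennreal_term_bound {n : ℕ} (hn : 0 < n) {m : ℝ≥0∞} (hm : m ≤ 1) :
    m * (1 - m) ^ n ≤ ENNReal.ofReal (Real.exp 1 * n)⁻¹ := by
  have hmt : m ≠ ⊤ := (hm.trans_lt one_lt_top).ne
  set a := m.toReal with ha
  have ha0 : 0 ≤ a := ENNReal.toReal_nonneg
  have ha1 : a ≤ 1 := by
    rw [ha, ← ENNReal.toReal_one]
    exact ENNReal.toReal_mono one_ne_top hm
  have hma : m = ENNReal.ofReal a := (ENNReal.ofReal_toReal hmt).symm
  have h1m : (1 : ℝ≥0∞) - m = ENNReal.ofReal (1 - a) := by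
    rw [ENNReal.ofReal_sub _ ha0, ENNReal.ofReal_one, hma]
  rw [h1m, hma, ← ENNReal.ofReal_pow (by linarith), ← ENNReal.ofReal_mul ha0]
  exact ENNReal.ofReal_le_ofReal (real_bound n hn ha0 ha1)

variable {α : Type*} [MeasurableSpace α] {ι : Type*} [Fintype ι]

lemma lint_sum (P : Measure α) [IsProbabilityMeasure P] (n : ℕ)
    (D : ι → Set α) (hD : ∀ c, MeasurableSet (D c)) :
    ∫⁻ s, (∑ c : ι, (Set.pi univ fun _ : Fin n => (D c)ᶜ).indicator
        (fun _ => P (D c)) s) ∂(Measure.pi fun _ : Fin n => P)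
      = ∑ c : ι, P (D c) * (1 - P (D c)) ^ n := by
  have hcyl : ∀ c : ι, MeasurableSet (Set.pi univ fun _ : Fin n => (D c)ᶜ) :=
    fun c => MeasurableSet.univ_pi fun _ => (hD c).compl
  rw [lintegral_finset_sum]
  · apply Finset.sum_congr rfl
    intro c _
    rw [lintegral_indicator (hcyl c), setLIntegral_const, Measure.pi_pi]
    rw [measure_compl (hD c) (measure_ne_top P (D c)), measure_univ]
    rw [Finset.prod_const, Finset.card_univ, Fintype.card_fin]
  · exact fun c _ => Measurable.indicator measurable_const (hcyl c)

lemma markov_bound (P : Measure α) [IsProbabilityMeasure P] (n : ℕ)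
    (D : ι → Set α) (hD : ∀ c, MeasurableSet (D c)) {ε δ : ℝ}
    (hε : 0 < ε)
    (hsum : (∑ c : ι, P (D c) * (1 - P (D c)) ^ n) ≤ ENNReal.ofReal (ε * δ)) :
    (Measure.pi fun _ : Fin n => P)
      {s | ENNReal.ofReal ε ≤ ∑ c : ι, (Set.pi univ fun _ : Fin n => (D c)ᶜ).indicator
        (fun _ => P (D c)) s} ≤ ENNReal.ofReal δ := by
  have hcyl : ∀ c : ι, MeasurableSet (Set.pi univ fun _ : Fin n => (D c)ᶜ) :=
    fun c => MeasurableSet.univ_pi fun _ => (hD c).compl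
  have hFmeas : Measurable (fun s : Fin n → α => ∑ c : ι,
      (Set.pi univ fun _ : Fin n => (D c)ᶜ).indicator (fun _ => P (D c)) s) := by
    apply Finset.measurable_sum
    exact fun c _ => Measurable.indicator measurable_const (hcyl c)
  have hmark := mul_meas_ge_le_lintegral₀
    (μ := Measure.pi fun _ : Fin n => P) hFmeas.aemeasurable (ENNReal.ofReal ε)
  rw [lint_sum P n D hD] at hmark
  have h2 : ENNReal.ofReal ε * (Measure.pi fun _ : Fin n => P)
      {s | ENNReal.ofReal ε ≤ ∑ c : ι, (Set.pi univ fun _ : Fin n => (D c)ᶜ).indicator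
        (fun _ => P (D c)) s} ≤ ENNReal.ofReal ε * ENNReal.ofReal δ := by
    refine hmark.trans (hsum.trans ?_)
    rw [← ENNReal.ofReal_mul hε.le]
  rwa [ENNReal.mul_le_mul_iff_right (by simp [hε]) ENNReal.ofReal_ne_top] at h2

end NNAux

end NNAux

/-- consistency of 1-NN under the 1/2-adaptive robust
augmentation: for a deterministically labeled distribution on `[0,1]^d`, a
radius `r` with margin mass at most `ε`, and sample size
`n ≥ 3^d d^{d/2} / (e·r^d·ε·δ)`, with probability at least `1 − δ` over the
i.i.d. sample, every 1-nearest-neighbor rule on the 1/2-adaptive robust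
augmentation (nearest-distance measured to the expansion balls) correctly
classifies each point of the cube that lies outside the `r`-margin of `f` and
within `r/3` of a sample point (i.e. in a non-empty cell of a partition into
cells of diameter `r/3`), and consequently has 0/1 risk at most `2ε`. -/
theorem nn_adaptive_augmentation_consistent (d n : ℕ) (hd : 0 < d) (hn0 : 0 < n)
    (P : Measure (EuclideanSpace ℝ (Fin d) × Bool)) [IsProbabilityMeasure P]
    (f : EuclideanSpace ℝ (Fin d) → Bool)
    (hdet : P {p | p.2 ≠ f p.1} = 0)
    (hsupp : P {p | ∀ i, p.1 i ∈ Icc (0 : ℝ) 1} = 1)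
    (ε δ r : ℝ) (hε : 0 < ε) (hδ : 0 < δ) (hr : 0 < r)
    (hΦ : P {p | p.1 ∈ marginArea r f} ≤ ENNReal.ofReal ε)
    (hsize : (3 : ℝ) ^ d * (d : ℝ) ^ ((d : ℝ) / 2) /
        (Real.exp 1 * r ^ d * ε * δ) ≤ n) :
    -- distance from a sample point to its nearest opposite-label sample point
    let ρS : (Fin n → EuclideanSpace ℝ (Fin d) × Bool) → Fin n → ℝ := fun s i =>
      sInf {t | ∃ j : Fin n, (s j).2 ≠ (s i).2 ∧ t = dist (s i).1 (s j).1}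
    -- distance from `x` to the 1/2-adaptive expansion ball of the i-th point
    let expDist : (Fin n → EuclideanSpace ℝ (Fin d) × Bool) → Fin n →
        EuclideanSpace ℝ (Fin d) → ℝ := fun s i x =>
      max (dist x (s i).1 - ρS s i / 2) 0
    -- `h` is a 1-NN rule on the 1/2-adaptive robust augmentation of `s`
    let isNN : (Fin n → EuclideanSpace ℝ (Fin d) × Bool) →
        (EuclideanSpace ℝ (Fin d) → Bool) → Prop := fun s h =>
      ∀ x, ∃ i : Fin n, (∀ j : Fin n, expDist s i x ≤ expDist s j x) ∧ h x = (s i).2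
    1 - ENNReal.ofReal δ ≤
      (Measure.pi fun _ : Fin n => P) {s | (∀ i, (s i).2 = f (s i).1) →
        ∀ h, isNN s h →
          (∀ x : EuclideanSpace ℝ (Fin d), (∀ i, x i ∈ Icc (0 : ℝ) 1) →
            x ∉ marginArea r f → (∃ i : Fin n, dist x (s i).1 < r / 3) →
            h x = f x) ∧
          zeroOneRisk P h ≤ ENNReal.ofReal (2 * ε)} := by
  intro ρS expDist isNN
  classical
  set N : Set (EuclideanSpace ℝ (Fin d) × Bool) :=
    toMeasurable P {p | p.2 ≠ f p.1} with hNdef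
  have hNmeas : MeasurableSet N := measurableSet_toMeasurable _ _
  have hNsub : {p : EuclideanSpace ℝ (Fin d) × Bool | p.2 ≠ f p.1} ⊆ N :=
    subset_toMeasurable _ _
  have hN0 : P N = 0 := by rw [hNdef, measure_toMeasurable]; exact hdet
  set M : Set (EuclideanSpace ℝ (Fin d) × Bool) :=
    toMeasurable P {p | p.1 ∈ marginArea r f} with hMdef
  have hMmeas : MeasurableSet M := measurableSet_toMeasurable _ _
  have hMsub : {p : EuclideanSpace ℝ (Fin d) × Bool | p.1 ∈ marginArea r f} ⊆ M :=
    subset_toMeasurable _ _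
  have hMε : P M ≤ ENNReal.ofReal ε := by rw [hMdef, measure_toMeasurable]; exact hΦ
  set KP : Set (EuclideanSpace ℝ (Fin d) × Bool) :=
    {p | ∀ i, p.1 i ∈ Icc (0:ℝ) 1} with hKPdef
  have hKPmeas : MeasurableSet KP := NNAux.measurable_cube
  have hKP1 : P KP = 1 := hsupp
  have hKPc0 : P KPᶜ = 0 := by
    rw [measure_compl hKPmeas (measure_ne_top _ _), measure_univ, hKP1, tsub_self]
  set Kcyl : Set (Fin n → EuclideanSpace ℝ (Fin d) × Bool) :=
    Set.pi univ fun _ : Fin n => KP with hKcyldef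
  have hKcylmeas : MeasurableSet Kcyl := MeasurableSet.univ_pi fun _ => hKPmeas
  have hKcyl1 : (Measure.pi fun _ : Fin n => P) Kcyl = 1 := by
    rw [hKcyldef, Measure.pi_pi]
    simp [hKP1]
  by_cases hcase : Real.sqrt d < r
  -- Case A : r > √d ; every sample is within r of every cube point
  · calc 1 - ENNReal.ofReal δ ≤ 1 := tsub_le_self
      _ = (Measure.pi fun _ : Fin n => P) Kcyl := hKcyl1.symm
      _ ≤ _ := by
          apply measure_mono
          intro s hs
          have hsK : ∀ i, s i ∈ KP := fun i => hs i (mem_univ i)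
          intro hlab h hNNh
          constructor
          · intro x hxK hxMar hex
            obtain ⟨i₀, hi₀⟩ := hex
            exact NNAux.nn_correct f r s hr hlab hNNh hxMar hi₀
          · show P {p | h p.1 ≠ p.2} ≤ ENNReal.ofReal (2 * ε)
            have hsub : {p : EuclideanSpace ℝ (Fin d) × Bool | h p.1 ≠ p.2}
                ⊆ N ∪ M ∪ KPᶜ := by
              intro p hp
              by_contra hc
              simp only [Set.mem_union, not_or] at hc
              obtain ⟨⟨hpN, hpM⟩, hpK⟩ := hc
              have hpKP : p ∈ KP := by
                simpa using (not_not.mp (by simpa using hpK))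
              have hp2 : p.2 = f p.1 := by
                by_contra hne; exact hpN (hNsub hne)
              have hxMar : p.1 ∉ marginArea r f := fun hm => hpM (hMsub hm)
              obtain ⟨i, hmin, hval⟩ := hNNh p.1
              have herr : h p.1 ≠ f p.1 := by rw [← hp2]; exact hp
              have hne : (s i).2 ≠ f p.1 := by rw [← hval]; exact herr
              have hfar : r ≤ dist p.1 (s i).1 :=
                NNAux.notMar_far f r s hlab hxMar hne
              have hclose : dist p.1 (s i).1 ≤ Real.sqrt d :=
                NNAux.dist_le_sqrt_of_cube hpKP (hsK i)
              linarith
            calc P {p | h p.1 ≠ p.2} ≤ P (N ∪ M ∪ KPᶜ) := measure_mono hsub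
              _ ≤ P (N ∪ M) + P KPᶜ := measure_union_le _ _
              _ ≤ (P N + P M) + P KPᶜ := add_le_add_left (measure_union_le _ _) _
              _ ≤ (0 + ENNReal.ofReal ε) + 0 := by
                  refine add_le_add (add_le_add hN0.le hMε) hKPc0.le
              _ = ENNReal.ofReal ε := by simp
              _ ≤ ENNReal.ofReal (2 * ε) := ENNReal.ofReal_le_ofReal (by linarith)
  -- Case B : r ≤ √d ; covering argument
  · push_neg at hcase
    have hd1 : (1:ℝ) ≤ (d:ℝ) := by exact_mod_cast hd
    have hsd : 0 < Real.sqrt d := Real.sqrt_pos.mpr (by linarith)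
    set x : ℝ := 3 * Real.sqrt d / r with hxdef
    have hx3 : 3 ≤ x := by
      rw [hxdef, le_div_iff₀ hr]; linarith
    set k : ℕ := ⌊2 * x / 3⌋₊ + 1 with hkdef
    have hk0 : 0 < k := Nat.succ_pos _
    have hkreal : (0:ℝ) < k := by exact_mod_cast hk0
    have hkx : (k:ℝ) ≤ x := by
      have hfl : (⌊2 * x / 3⌋₊ : ℝ) ≤ 2 * x / 3 := Nat.floor_le (by positivity)
      have : (k:ℝ) = (⌊2 * x / 3⌋₊ : ℝ) + 1 := by rw [hkdef]; push_cast; ring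
      rw [this]; linarith
    have hklow : 2 * Real.sqrt d / r < (k:ℝ) := by
      have h1 : 2 * x / 3 < (⌊2 * x / 3⌋₊ : ℝ) + 1 := Nat.lt_floor_add_one _
      have h2 : 2 * Real.sqrt d / r = 2 * x / 3 := by
        rw [hxdef]; ring
      have h3 : (k:ℝ) = (⌊2 * x / 3⌋₊ : ℝ) + 1 := by rw [hkdef]; push_cast; ring
      rw [h2, h3]; exact h1
    have hcell_rad : Real.sqrt d / k < r / 2 := by
      rw [div_lt_iff₀ hr] at hklow
      rw [div_lt_iff₀ hkreal]
      linarith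
    set D : ((Fin d → Fin k) × Bool) → Set (EuclideanSpace ℝ (Fin d) × Bool) :=
      fun c => (({p | p.1 ∈ NNAux.cell k c.1} ∩ {p | p.2 = c.2}) ∩ Mᶜ) ∩ Nᶜ with hDdef
    have hDmeas : ∀ c, MeasurableSet (D c) := by
      intro c
      refine (((NNAux.measurable_cell c.1).inter ?_).inter hMmeas.compl).inter hNmeas.compl
      exact measurable_snd (measurableSet_singleton c.2)
    -- exclusivity: at most one label per cell carries mass
    have hexcl : ∀ m : Fin d → Fin k, P (D (m, false)) = 0 ∨ P (D (m, true)) = 0 := by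
      intro m
      by_contra hc
      push_neg at hc
      obtain ⟨hf0, ht0⟩ := hc
      obtain ⟨p, hp⟩ := nonempty_of_measure_ne_zero hf0
      obtain ⟨q, hq⟩ := nonempty_of_measure_ne_zero ht0
      obtain ⟨⟨⟨hpc, hpb⟩, hpM⟩, hpN⟩ := hp
      obtain ⟨⟨⟨hqc, hqb⟩, _⟩, hqN⟩ := hq
      have hp2 : p.2 = f p.1 := by
        by_contra hne; exact hpN (hNsub hne)
      have hq2 : q.2 = f q.1 := by
        by_contra hne; exact hqN (hNsub hne)
      have hfp : f p.1 = false := by rw [← hp2]; exact hpb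
      have hfq : f q.1 = true := by rw [← hq2]; exact hqb
      have hdd : dist p.1 q.1 ≤ Real.sqrt d / k :=
        NNAux.dist_le_of_mem_cell hk0 hpc hqc
      have hMar : p.1 ∈ marginArea r f := by
        refine ⟨q.1, by linarith, by rw [hfp, hfq]; simp⟩
      exact hpM (hMsub hMar)
    -- the sum bound
    have hterm : ∀ c : (Fin d → Fin k) × Bool,
        P (D c) * (1 - P (D c)) ^ n ≤ ENNReal.ofReal (Real.exp 1 * n)⁻¹ :=
      fun c => NNAux.ennreal_term_bound hn0 prob_le_one
    have hsum : (∑ c : (Fin d → Fin k) × Bool, P (D c) * (1 - P (D c)) ^ n)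
        ≤ ENNReal.ofReal (ε * δ) := by
      have hper : ∀ m : Fin d → Fin k,
          (∑ b : Bool, P (D (m, b)) * (1 - P (D (m, b))) ^ n)
            ≤ ENNReal.ofReal (Real.exp 1 * n)⁻¹ := by
        intro m
        rcases hexcl m with h0 | h0
        · rw [Fintype.sum_bool, h0]
          simp only [zero_mul, add_zero]
          exact hterm (m, true)
        · rw [Fintype.sum_bool, h0]
          simp only [zero_mul, zero_add]
          exact hterm (m, false)
      calc (∑ c : (Fin d → Fin k) × Bool, P (D c) * (1 - P (D c)) ^ n)
          = ∑ m : Fin d → Fin k, ∑ b : Bool, P (D (m, b)) * (1 - P (D (m, b))) ^ n :=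
            Fintype.sum_prod_type _
        _ ≤ ∑ _m : Fin d → Fin k, ENNReal.ofReal (Real.exp 1 * n)⁻¹ :=
            Finset.sum_le_sum fun m _ => hper m
        _ = (Fintype.card (Fin d → Fin k)) • ENNReal.ofReal (Real.exp 1 * n)⁻¹ := by
            rw [Finset.sum_const, Finset.card_univ]
        _ = (k ^ d : ℕ) • ENNReal.ofReal (Real.exp 1 * n)⁻¹ := by
            rw [Fintype.card_fun, Fintype.card_fin, Fintype.card_fin]
        _ ≤ ENNReal.ofReal (ε * δ) := by
            rw [nsmul_eq_mul, ← ENNReal.ofReal_natCast (k ^ d),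
              ← ENNReal.ofReal_mul (by positivity)]
            apply ENNReal.ofReal_le_ofReal
            push_cast
            -- real arithmetic
            have hkpow : (k:ℝ)^d ≤ x^d := pow_le_pow_left₀ hkreal.le hkx d
            have hsqd : (Real.sqrt d)^d = (d:ℝ) ^ ((d:ℝ)/2) := by
              rw [Real.sqrt_eq_rpow, ← Real.rpow_natCast ((d:ℝ) ^ ((1:ℝ)/2)) d,
                ← Real.rpow_mul (by positivity)]
              congr 1
              ring
            have hxpow : x^d = 3^d * (d:ℝ)^((d:ℝ)/2) / r^d := by
              rw [hxdef, div_pow, mul_pow, hsqd]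
            have hA0 : (0:ℝ) < 3^d * (d:ℝ)^((d:ℝ)/2) := by positivity
            have hden : (0:ℝ) < Real.exp 1 * r^d * ε * δ := by positivity
            have hn' : (0:ℝ) < n := by exact_mod_cast hn0
            have hsize' : 3^d * (d:ℝ)^((d:ℝ)/2) ≤ n * (Real.exp 1 * r^d * ε * δ) :=
              (div_le_iff₀ hden).mp hsize
            have hchain : x^d ≤ Real.exp 1 * n * ε * δ := by
              rw [hxpow, div_le_iff₀ (pow_pos hr d)]
              nlinarith [hsize']
            have hen : (0:ℝ) < Real.exp 1 * n := by positivity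
            rw [← div_eq_mul_inv, div_le_iff₀ hen]
            have hkc : ((⌊2 * x / 3⌋₊ : ℕ) : ℝ) + 1 = (k : ℝ) := by
              rw [hkdef]; push_cast; ring
            nlinarith [hkpow, hchain]
    have hmark := NNAux.markov_bound P n D hDmeas hε hsum
    -- the good event
    set Fn : (Fin n → EuclideanSpace ℝ (Fin d) × Bool) → ℝ≥0∞ := fun s =>
      ∑ c : (Fin d → Fin k) × Bool,
        (Set.pi univ fun _ : Fin n => (D c)ᶜ).indicator (fun _ => P (D c)) s with hFndef
    have hFnmeas : Measurable Fn := by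
      apply Finset.measurable_sum
      exact fun c _ => Measurable.indicator measurable_const
        (MeasurableSet.univ_pi fun _ => (hDmeas c).compl)
    set Good : Set (Fin n → EuclideanSpace ℝ (Fin d) × Bool) :=
      Kcyl ∩ {s | Fn s < ENNReal.ofReal ε} with hGooddef
    have hGmeas : MeasurableSet Good :=
      hKcylmeas.inter (measurableSet_lt hFnmeas measurable_const)
    have hGoodc : (Measure.pi fun _ : Fin n => P) Goodᶜ ≤ ENNReal.ofReal δ := by
      have hcompl : Goodᶜ = Kcylᶜ ∪ {s | Fn s < ENNReal.ofReal ε}ᶜ := by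
        rw [hGooddef, Set.compl_inter]
      have hco : {s : Fin n → EuclideanSpace ℝ (Fin d) × Bool |
          Fn s < ENNReal.ofReal ε}ᶜ = {s | ENNReal.ofReal ε ≤ Fn s} := by
        ext t; simp [not_lt]
      have hKcylc : (Measure.pi fun _ : Fin n => P) Kcylᶜ = 0 := by
        rw [measure_compl hKcylmeas (measure_ne_top _ _), measure_univ, hKcyl1, tsub_self]
      calc (Measure.pi fun _ : Fin n => P) Goodᶜ
          ≤ (Measure.pi fun _ : Fin n => P) Kcylᶜ +
            (Measure.pi fun _ : Fin n => P) {s | Fn s < ENNReal.ofReal ε}ᶜ := by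
            rw [hcompl]; exact measure_union_le _ _
        _ ≤ 0 + ENNReal.ofReal δ := by
            refine add_le_add hKcylc.le ?_
            rw [hco]
            exact hmark
        _ = ENNReal.ofReal δ := zero_add _
    have hGoodlb : 1 - ENNReal.ofReal δ ≤ (Measure.pi fun _ : Fin n => P) Good := by
      have h4 := measure_add_measure_compl (μ := Measure.pi fun _ : Fin n => P) hGmeas
      rw [measure_univ] at h4
      rw [tsub_le_iff_right]
      calc (1:ℝ≥0∞) = (Measure.pi fun _ : Fin n => P) Good +
            (Measure.pi fun _ : Fin n => P) Goodᶜ := h4.symm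
        _ ≤ (Measure.pi fun _ : Fin n => P) Good + ENNReal.ofReal δ :=
            add_le_add_right hGoodc _
    refine hGoodlb.trans (measure_mono ?_)
    intro s hs
    obtain ⟨hsK', hsF'⟩ := hs
    have hsK : ∀ i, s i ∈ KP := fun i => hsK' i (mem_univ i)
    have hFs : Fn s ≤ ENNReal.ofReal ε := le_of_lt hsF'
    intro hlab h hNNh
    constructor
    · intro xx hxK hxMar hex
      obtain ⟨i₀, hi₀⟩ := hex
      exact NNAux.nn_correct f r s hr hlab hNNh hxMar hi₀
    · show P {p | h p.1 ≠ p.2} ≤ ENNReal.ofReal (2 * ε)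
      set U : Set (EuclideanSpace ℝ (Fin d) × Bool) :=
        ⋃ c : (Fin d → Fin k) × Bool,
          (if s ∈ (Set.pi univ fun _ : Fin n => (D c)ᶜ) then D c else ∅) with hUdef
      have hsub : {p : EuclideanSpace ℝ (Fin d) × Bool | h p.1 ≠ p.2}
          ⊆ ((N ∪ M) ∪ KPᶜ) ∪ U := by
        intro p hp
        by_contra hc
        simp only [Set.mem_union, not_or] at hc
        obtain ⟨⟨⟨hpN, hpM⟩, hpK⟩, hpU⟩ := hc
        have hpKP : p ∈ KP := by
          simpa using (not_not.mp (by simpa using hpK))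
        have hp2 : p.2 = f p.1 := by
          by_contra hne; exact hpN (hNsub hne)
        have hxMar : p.1 ∉ marginArea r f := fun hm => hpM (hMsub hm)
        obtain ⟨i, hmin, hval⟩ := hNNh p.1
        have herr : h p.1 ≠ f p.1 := by rw [← hp2]; exact hp
        have hne : (s i).2 ≠ f p.1 := by rw [← hval]; exact herr
        have hsep := NNAux.sep_lemma f r s hr hlab hxMar hmin hne
        obtain ⟨m, hm⟩ := NNAux.exists_cell hk0 hpKP
        have hcylmem : s ∈ (Set.pi univ fun _ : Fin n => (D (m, f p.1))ᶜ) := by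
          intro j _
          show s j ∉ D (m, f p.1)
          intro hjD
          obtain ⟨⟨⟨hjc, hjb⟩, _⟩, _⟩ := hjD
          have hdd : dist p.1 (s j).1 ≤ Real.sqrt d / k :=
            NNAux.dist_le_of_mem_cell hk0 hm hjc
          have hge := hsep j hjb
          linarith
        apply hpU
        rw [hUdef]
        refine mem_iUnion.mpr ⟨(m, f p.1), ?_⟩
        rw [if_pos hcylmem]
        exact ⟨⟨⟨hm, hp2⟩, hpM⟩, hpN⟩
      have hU : P U ≤ Fn s := by
        calc P U ≤ ∑' c : (Fin d → Fin k) × Bool,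
              P (if s ∈ (Set.pi univ fun _ : Fin n => (D c)ᶜ) then D c else ∅) := by
              rw [hUdef]; exact measure_iUnion_le _
          _ = ∑ c : (Fin d → Fin k) × Bool,
              P (if s ∈ (Set.pi univ fun _ : Fin n => (D c)ᶜ) then D c else ∅) :=
              tsum_fintype _
          _ = Fn s := by
              rw [hFndef]
              apply Finset.sum_congr rfl
              intro c _
              by_cases hcc : s ∈ (Set.pi univ fun _ : Fin n => (D c)ᶜ)
              · rw [if_pos hcc, Set.indicator_of_mem hcc]
              · rw [if_neg hcc, Set.indicator_of_notMem hcc, measure_empty]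
      calc P {p | h p.1 ≠ p.2} ≤ P (((N ∪ M) ∪ KPᶜ) ∪ U) := measure_mono hsub
        _ ≤ P ((N ∪ M) ∪ KPᶜ) + P U := measure_union_le _ _
        _ ≤ (P (N ∪ M) + P KPᶜ) + P U := add_le_add_left (measure_union_le _ _) _
        _ ≤ ((P N + P M) + P KPᶜ) + P U :=
            add_le_add_left (add_le_add_left (measure_union_le _ _) _) _
        _ ≤ ((0 + ENNReal.ofReal ε) + 0) + ENNReal.ofReal ε := by
            refine add_le_add (add_le_add (add_le_add hN0.le hMε) hKPc0.le) (hU.trans hFs)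
        _ = ENNReal.ofReal ε + ENNReal.ofReal ε := by simp
        _ = ENNReal.ofReal (2 * ε) := by
            rw [← ENNReal.ofReal_add hε.le hε.le]; ring_nf
end
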